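/- arXiv:1212.6723 — 8 statements merged into one kernel-verified Lean document; each statement's English description precedes it below -/
import Mathlib

section
/- Let $G_1,G_2,G_3,G_\infty$ be real numbers of the form $G_i=e^{p_i/2}+e^{-p_i/2}$ for $i=1,2,3$ and $G_\infty=e^{s_1+s_2+s_3}+e^{-s_1-s_2-s_3}$, where $p_1,p_2,p_3,s_1,s_2,s_3$ are real. Define $x_1=-e^{s_2+s_3}-e^{-s_2-s_3}-e^{-s_2+s_3}-G_2e^{s_3}-G_3e^{-s_2}$, $x_2=-e^{s_3+s_1}-e^{-s_3-s_1}-e^{-s_3+s_1}-G_3e^{s_1}-G_1e^{-s_3}$, $x_3=-e^{s_1+s_2}-e^{-s_1-s_2}-e^{-s_1+s_2}-G_1e^{s_2}-G_2e^{-s_1}$. Then $x_1x_2x_3+x_1^2+x_2^2+x_3^2+\omega_1x_1+\omega_2x_2+\omega_3x_3+\omega_4=0$, where $\omega_1=-G_1G_\infty-G_2G_3$, $\omega_2=-G_2G_\infty-G_1G_3$, $\omega_3=-G_3G_\infty-G_1G_2$, and $\omega_4=G_1^2+G_2^2+G_3^2+G_\infty^2+G_1G_2G_3G_\infty-4$.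 -/
theorem stmt_0 (p1 p2 p3 s1 s2 s3 G1 G2 G3 Ginf x1 x2 x3 w1 w2 w3 w4 : ℝ)
    (hG1 : G1 = Real.exp (p1/2) + Real.exp (-(p1/2)))
    (hG2 : G2 = Real.exp (p2/2) + Real.exp (-(p2/2)))
    (hG3 : G3 = Real.exp (p3/2) + Real.exp (-(p3/2)))
    (hGinf : Ginf = Real.exp (s1 + s2 + s3) + Real.exp (-s1 - s2 - s3))
    (hx1 : x1 = -Real.exp (s2 + s3) - Real.exp (-s2 - s3) - Real.exp (-s2 + s3)
      - G2 * Real.exp s3 - G3 * Real.exp (-s2))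
    (hx2 : x2 = -Real.exp (s3 + s1) - Real.exp (-s3 - s1) - Real.exp (-s3 + s1)
      - G3 * Real.exp s1 - G1 * Real.exp (-s3))
    (hx3 : x3 = -Real.exp (s1 + s2) - Real.exp (-s1 - s2) - Real.exp (-s1 + s2)
      - G1 * Real.exp s2 - G2 * Real.exp (-s1))
    (hw1 : w1 = -G1 * Ginf - G2 * G3)
    (hw2 : w2 = -G2 * Ginf - G1 * G3)
    (hw3 : w3 = -G3 * Ginf - G1 * G2)
    (hw4 : w4 = G1^2 + G2^2 + G3^2 + Ginf^2 + G1 * G2 * G3 * Ginf - 4) :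
    x1 * x2 * x3 + x1^2 + x2^2 + x3^2 + w1 * x1 + w2 * x2 + w3 * x3 + w4 = 0 := by
  subst hGinf hx1 hx2 hx3 hw1 hw2 hw3 hw4
  simp only [sub_eq_add_neg, neg_add_rev, neg_neg, Real.exp_add, Real.exp_neg]
  have h1 := (Real.exp_pos s1).ne'
  have h2 := (Real.exp_pos s2).ne'
  have h3 := (Real.exp_pos s3).ne'
  field_simp
  ring
end

section
/- Let $G_1,G_2,G_3$ be complex numbers and suppose $y_1y_2y_3+y_1^2+y_2^2+y_3^2+G_1y_2y_3+G_2y_1y_3+G_3y_1y_2=0$. Define $y_1':=-y_1-y_2y_3-G_2y_3-G_3y_2$. Then $y_1\,y_1'=y_2^2+y_3^2+G_1y_2y_3$, and $(y_1',y_2,y_3)$ satisfies the same cubic equation. -/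
theorem stmt_4 (G1 G2 G3 : ℂ) (y1 y2 y3 : ℂ)
    (h : y1*y2*y3 + y1^2 + y2^2 + y3^2 + G1*y2*y3 + G2*y1*y3 + G3*y1*y2 = 0)
    (y1' : ℂ) (hy1' : y1' = -y1 - y2*y3 - G2*y3 - G3*y2) :
    y1 * y1' = y2^2 + y3^2 + G1*y2*y3 ∧
      y1'*y2*y3 + y1'^2 + y2^2 + y3^2 + G1*y2*y3 + G2*y1'*y3 + G3*y1'*y2 = 0 := by
  subst hy1'
  refine ⟨by linear_combination -h, by linear_combination h⟩
end

section
/- Let $p_1,p_2,s_1,s_2,s_3$ be real numbers, set $G_1=e^{p_1/2}+e^{-p_1/2}$, $G_2=e^{p_2/2}+e^{-p_2/2}$, $G_3=1$, $G_\infty=e^{s_1+s_2+s_3}$. Define $x_1=-e^{s_2+s_3}-e^{-s_2+s_3}-G_2e^{s_3}-G_3e^{-s_2}$, $x_2=-e^{s_3+s_1}-G_3e^{s_1}$, $x_3=-e^{s_1+s_2}-e^{-s_1-s_2}-e^{-s_1+s_2}-G_1e^{s_2}-G_2e^{-s_1}$. Then $x_1x_2x_3+x_1^2+x_2^2+\omega_1x_1+\omega_2x_2+\omega_3x_3+\omega_4=0$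 where $\omega_1=-G_1G_\infty-G_2G_3$, $\omega_2=-G_2G_\infty-G_1G_3$, $\omega_3=-G_3G_\infty$, $\omega_4=G_3^2+G_\infty^2+G_1G_2G_3G_\infty$. -/
theorem stmt_7 (p1 p2 s1 s2 s3 G1 G2 G3 Ginf x1 x2 x3 w1 w2 w3 w4 : ℝ)
    (hG1 : G1 = Real.exp (p1/2) + Real.exp (-(p1/2)))
    (hG2 : G2 = Real.exp (p2/2) + Real.exp (-(p2/2)))
    (hG3 : G3 = 1)
    (hGinf : Ginf = Real.exp (s1 + s2 + s3))
    (hx1 : x1 = -Real.exp (s2 + s3) - Real.exp (-s2 + s3)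
      - G2 * Real.exp s3 - G3 * Real.exp (-s2))
    (hx2 : x2 = -Real.exp (s3 + s1) - G3 * Real.exp s1)
    (hx3 : x3 = -Real.exp (s1 + s2) - Real.exp (-s1 - s2) - Real.exp (-s1 + s2)
      - G1 * Real.exp s2 - G2 * Real.exp (-s1))
    (hw1 : w1 = -G1 * Ginf - G2 * G3)
    (hw2 : w2 = -G2 * Ginf - G1 * G3)
    (hw3 : w3 = -G3 * Ginf)
    (hw4 : w4 = G3^2 + Ginf^2 + G1 * G2 * G3 * Ginf) :
    x1 * x2 * x3 + x1^2 + x2^2 + w1 * x1 + w2 * x2 + w3 * x3 + w4 = 0 := by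
  subst hG1 hG2 hG3 hGinf hx1 hx2 hx3 hw1 hw2 hw3 hw4
  simp only [Real.exp_add, Real.exp_neg, sub_eq_add_neg]
  have h1 := Real.exp_ne_zero s1
  have h2 := Real.exp_ne_zero s2
  have h3 := Real.exp_ne_zero s3
  have hp1 := Real.exp_ne_zero (p1/2)
  have hp2 := Real.exp_ne_zero (p2/2)
  field_simp
  ring
end

section
/- Let $G_1,G_2,G_\infty$ be complex numbers, and set $\omega_1=-G_1G_\infty-G_2$, $\omega_2=-G_2G_\infty-G_1$, $\omega_3=-G_\infty$, $\omega_4=1+G_\infty^2+G_1G_2G_\infty$. Let $x_2$ be given and let $u\ne 0$ satisfy $\frac{G_\infty^2}{u^2}-\frac{G_\infty(G_2+G_1G_\infty)}{u}-(G_1+G_2G_\infty)u+u^2 = x_2^4+(G_2+G_1G_\infty)x_2^2+(G_1+G_2G_\infty)x_2$. Then substituting $X_1=x_1-x_3+\frac{G_\infty}{u}$, $X_2=u$, $X_3=\frac{2x_3}{u}+\frac{G_2+G_1G_\infty}{u}-\frac{2G_\infty}{u^2}$ into $X_1X_2X_3+X_1^2+X_2^2+\omega_1X_1+\omega_2X_2+\omega_3X_3+\omega_4$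 yields $x_1^2-x_3^2+x_2^4+(G_2+G_1G_\infty)x_2^2+(G_1+G_2G_\infty)x_2+1+G_1G_2G_\infty+G_\infty^2$. -/
theorem stmt_11 (G1 G2 Ginf : ℂ) (w1 w2 w3 w4 : ℂ)
    (hw1 : w1 = -G1*Ginf - G2) (hw2 : w2 = -G2*Ginf - G1)
    (hw3 : w3 = -Ginf) (hw4 : w4 = 1 + Ginf^2 + G1*G2*Ginf)
    (x2 u : ℂ) (hu : u ≠ 0)
    (h : Ginf^2/u^2 - Ginf*(G2 + G1*Ginf)/u - (G1 + G2*Ginf)*u + u^2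
      = x2^4 + (G2 + G1*Ginf)*x2^2 + (G1 + G2*Ginf)*x2) :
    ∀ x1 x3 : ℂ,
      (x1 - x3 + Ginf/u) * u * (2*x3/u + (G2 + G1*Ginf)/u - 2*Ginf/u^2)
        + (x1 - x3 + Ginf/u)^2 + u^2
        + w1*(x1 - x3 + Ginf/u) + w2*u
        + w3*(2*x3/u + (G2 + G1*Ginf)/u - 2*Ginf/u^2) + w4
      = x1^2 - x3^2 + x2^4 + (G2 + G1*Ginf)*x2^2 + (G1 + G2*Ginf)*x2
          + 1 + G1*G2*Ginf + Ginf^2 := by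
  intro x1 x3
  subst hw1 hw2 hw3 hw4
  have hv : u * u⁻¹ = 1 := mul_inv_cancel₀ hu
  linear_combination h + (-2*x3^2 + 2*x1*x3 + 4*Ginf*x3*u⁻¹ - 2*Ginf*x1*u⁻¹
    - 2*Ginf^2*u⁻¹^2 - G2*x3 + G2*x1 + G2*Ginf*u⁻¹
    - G1*Ginf*x3 + G1*Ginf*x1 + G1*Ginf^2*u⁻¹) * hv
end

section
/- Let $G_1,G_\infty$ be complex numbers and set $\omega_1=-G_1G_\infty-G_\infty^2$, $\omega_2=-G_\infty^2$, $\omega_3=-G_\infty^2$, $\omega_4=G_\infty^2+G_1G_\infty^3$. Let $x_2$ be given and let $u\ne 0$ satisfy $\frac{G_\infty^4}{u^2}-\frac{G_\infty^3(G_\infty+G_1)}{u}-G_\infty^2 u = x_2^3+G_\infty x_2$. Then there exists a constant $c$ depending only on $G_1$ and $G_\infty$ such that substituting $X_1=x_1-x_3+\frac{G_\infty^2}{u}$, $X_2=u$, $X_3=\frac{2x_3}{u}+\frac{G_\infty(G_1+G_\infty)}{u}-\frac{2G_\infty^2}{u^2}$ into $X_1X_2X_3+X_1^2+\omega_1X_1+\omega_2X_2+\omega_3X_3+\omega_4$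 yields $x_1^2-x_3^2+x_2^3+G_\infty x_2+c$. -/
theorem stmt_12 (G1 Ginf : ℂ) (w1 w2 w3 w4 : ℂ)
    (hw1 : w1 = -G1*Ginf - Ginf^2) (hw2 : w2 = -Ginf^2)
    (hw3 : w3 = -Ginf^2) (hw4 : w4 = Ginf^2 + G1*Ginf^3) :
    ∃ c : ℂ, ∀ x2 u : ℂ, u ≠ 0 →
      (Ginf^4/u^2 - Ginf^3*(Ginf + G1)/u - Ginf^2*u = x2^3 + Ginf*x2) →
      ∀ x1 x3 : ℂ,
        (x1 - x3 + Ginf^2/u) * u * (2*x3/u + Ginf*(G1 + Ginf)/u - 2*Ginf^2/u^2)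
          + (x1 - x3 + Ginf^2/u)^2
          + w1*(x1 - x3 + Ginf^2/u) + w2*u
          + w3*(2*x3/u + Ginf*(G1 + Ginf)/u - 2*Ginf^2/u^2) + w4
        = x1^2 - x3^2 + x2^3 + Ginf*x2 + c := by
  subst hw1 hw2 hw3 hw4
  refine ⟨Ginf^2 + G1*Ginf^3, fun x2 u hu h x1 x3 => ?_⟩
  have h3 : Ginf^4 - Ginf^3*(Ginf+G1)*u - Ginf^2*u^3 = (x2^3 + Ginf*x2)*u^2 := by
    rw [← h]; field_simp
  rw [← sub_eq_zero]
  field_simp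
  linear_combination h3
end

section
/- Let $s_1,s_2,s_3,p_1,p_2,p_3$ be coordinates on $\mathbb{R}^6$ with Poisson bracket determined by $\{s_1,s_2\}=\{s_2,s_3\}=\{s_3,s_1\}=1$ and $p_1,p_2,p_3$ central. Let $G_i=e^{p_i/2}+e^{-p_i/2}$, and let $x_1,x_2,x_3$ be defined by the Painlevé VI shear parameterisation: $x_1=-e^{s_2+s_3}-e^{-s_2-s_3}-e^{-s_2+s_3}-G_2e^{s_3}-G_3e^{-s_2}$ and cyclically. Then $\{x_1,x_2\}=x_1x_2+2x_3+\omega_3$, where $\omega_3=-G_3G_\infty-G_1G_2$ and $G_\infty=e^{s_1+s_2+s_3}+e^{-s_1-s_2-s_3}$. -/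
/-- Partial derivative of `f : (Fin 3 → ℝ) → ℝ` in the `i`-th coordinate at `s`. -/
noncomputable def pd (i : Fin 3) (f : (Fin 3 → ℝ) → ℝ) (s : Fin 3 → ℝ) : ℝ :=
  deriv (fun t => f (Function.update s i t)) (s i)

/-- The Poisson bracket determined by `{s₁,s₂} = {s₂,s₃} = {s₃,s₁} = 1`. -/
noncomputable def shearBracket (f g : (Fin 3 → ℝ) → ℝ) (s : Fin 3 → ℝ) : ℝ :=
  (pd 0 f s * pd 1 g s - pd 1 f s * pd 0 g s)
  + (pd 1 f s * pd 2 g s - pd 2 f s * pd 1 g s)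
  + (pd 2 f s * pd 0 g s - pd 0 f s * pd 2 g s)

/-- Derivative of `t ↦ a * exp (c*t + d)`. -/
lemma hd_aexp (a c d t : ℝ) :
    HasDerivAt (fun t => a * Real.exp (c * t + d)) (a * c * Real.exp (c * t + d)) t := by
  have h1 : HasDerivAt (fun t : ℝ => c * t + d) c t := by
    simpa using ((hasDerivAt_id t).const_mul c).add_const d
  have h2 := h1.exp
  have := h2.const_mul a
  simpa [mul_comm, mul_left_comm, mul_assoc] using this

lemma deriv5 (a1 c1 d1 a2 c2 d2 a3 c3 d3 a4 c4 d4 a5 c5 d5 t : ℝ) :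
    deriv (fun t => a1 * Real.exp (c1 * t + d1) + a2 * Real.exp (c2 * t + d2)
      + a3 * Real.exp (c3 * t + d3) + a4 * Real.exp (c4 * t + d4)
      + a5 * Real.exp (c5 * t + d5)) t
    = a1 * c1 * Real.exp (c1 * t + d1) + a2 * c2 * Real.exp (c2 * t + d2)
      + a3 * c3 * Real.exp (c3 * t + d3) + a4 * c4 * Real.exp (c4 * t + d4)
      + a5 * c5 * Real.exp (c5 * t + d5) := by
  exact (((((hd_aexp a1 c1 d1 t).add (hd_aexp a2 c2 d2 t)).add
    (hd_aexp a3 c3 d3 t)).add (hd_aexp a4 c4 d4 t)).add (hd_aexp a5 c5 d5 t)).deriv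

theorem stmt_16 (p1 p2 p3 G1 G2 G3 : ℝ)
    (hG1 : G1 = Real.exp (p1/2) + Real.exp (-(p1/2)))
    (hG2 : G2 = Real.exp (p2/2) + Real.exp (-(p2/2)))
    (hG3 : G3 = Real.exp (p3/2) + Real.exp (-(p3/2)))
    (x1 x2 x3 Ginf : (Fin 3 → ℝ) → ℝ)
    (hx1 : x1 = fun s => -Real.exp (s 1 + s 2) - Real.exp (-s 1 - s 2)
      - Real.exp (-s 1 + s 2) - G2 * Real.exp (s 2) - G3 * Real.exp (-s 1))
    (hx2 : x2 = fun s => -Real.exp (s 2 + s 0) - Real.exp (-s 2 - s 0)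
      - Real.exp (-s 2 + s 0) - G3 * Real.exp (s 0) - G1 * Real.exp (-s 2))
    (hx3 : x3 = fun s => -Real.exp (s 0 + s 1) - Real.exp (-s 0 - s 1)
      - Real.exp (-s 0 + s 1) - G1 * Real.exp (s 1) - G2 * Real.exp (-s 0))
    (hGinf : Ginf = fun s => Real.exp (s 0 + s 1 + s 2)
      + Real.exp (-s 0 - s 1 - s 2)) :
    ∀ s : Fin 3 → ℝ,
      shearBracket x1 x2 s
        = x1 s * x2 s + 2 * x3 s + (-G3 * Ginf s - G1 * G2) := by
  intro s
  subst hx1 hx2 hx3 hGinf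
  have e0 : ∀ i : Fin 3, (0 : Fin 3) = i ↔ i = 0 := fun i => eq_comm
  -- compute the six partial derivatives
  have key : ∀ (f : (Fin 3 → ℝ) → ℝ) (i : Fin 3)
      (a1 c1 d1 a2 c2 d2 a3 c3 d3 a4 c4 d4 a5 c5 d5 : ℝ),
      (fun t => f (Function.update s i t)) = (fun t => a1 * Real.exp (c1 * t + d1)
        + a2 * Real.exp (c2 * t + d2) + a3 * Real.exp (c3 * t + d3)
        + a4 * Real.exp (c4 * t + d4) + a5 * Real.exp (c5 * t + d5)) →
      pd i f s = a1 * c1 * Real.exp (c1 * s i + d1) + a2 * c2 * Real.exp (c2 * s i + d2)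
        + a3 * c3 * Real.exp (c3 * s i + d3) + a4 * c4 * Real.exp (c4 * s i + d4)
        + a5 * c5 * Real.exp (c5 * s i + d5) := by
    intro f i a1 c1 d1 a2 c2 d2 a3 c3 d3 a4 c4 d4 a5 c5 d5 h
    rw [pd, h, deriv5]
  have h1x1 := key (fun s => -Real.exp (s 1 + s 2) - Real.exp (-s 1 - s 2)
      - Real.exp (-s 1 + s 2) - G2 * Real.exp (s 2) - G3 * Real.exp (-s 1)) 1
      (-1) 1 (s 2) (-1) (-1) (-s 2) (-1) (-1) (s 2)
      (-(G2 * Real.exp (s 2))) 0 0 (-G3) (-1) 0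
      (by funext t; simp [Function.update]; ring_nf)
  have h2x1 := key (fun s => -Real.exp (s 1 + s 2) - Real.exp (-s 1 - s 2)
      - Real.exp (-s 1 + s 2) - G2 * Real.exp (s 2) - G3 * Real.exp (-s 1)) 2
      (-1) 1 (s 1) (-1) (-1) (-s 1) (-1) 1 (-s 1)
      (-G2) 1 0 (-(G3 * Real.exp (-s 1))) 0 0
      (by funext t; simp [Function.update]; ring_nf)
  have h0x1 := key (fun s => -Real.exp (s 1 + s 2) - Real.exp (-s 1 - s 2)
      - Real.exp (-s 1 + s 2) - G2 * Real.exp (s 2) - G3 * Real.exp (-s 1)) 0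
      (-Real.exp (s 1 + s 2) - Real.exp (-s 1 - s 2)
      - Real.exp (-s 1 + s 2) - G2 * Real.exp (s 2) - G3 * Real.exp (-s 1)) 0 0
      0 0 0 0 0 0 0 0 0 0 0 0
      (by funext t; simp [Function.update])
  have h2x2 := key (fun s => -Real.exp (s 2 + s 0) - Real.exp (-s 2 - s 0)
      - Real.exp (-s 2 + s 0) - G3 * Real.exp (s 0) - G1 * Real.exp (-s 2)) 2
      (-1) 1 (s 0) (-1) (-1) (-s 0) (-1) (-1) (s 0)
      (-(G3 * Real.exp (s 0))) 0 0 (-G1) (-1) 0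
      (by funext t; simp [Function.update]; ring_nf)
  have h0x2 := key (fun s => -Real.exp (s 2 + s 0) - Real.exp (-s 2 - s 0)
      - Real.exp (-s 2 + s 0) - G3 * Real.exp (s 0) - G1 * Real.exp (-s 2)) 0
      (-1) 1 (s 2) (-1) (-1) (-s 2) (-1) 1 (-s 2)
      (-G3) 1 0 (-(G1 * Real.exp (-s 2))) 0 0
      (by funext t; simp [Function.update]; ring_nf)
  have h1x2 := key (fun s => -Real.exp (s 2 + s 0) - Real.exp (-s 2 - s 0)
      - Real.exp (-s 2 + s 0) - G3 * Real.exp (s 0) - G1 * Real.exp (-s 2)) 1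
      (-Real.exp (s 2 + s 0) - Real.exp (-s 2 - s 0)
      - Real.exp (-s 2 + s 0) - G3 * Real.exp (s 0) - G1 * Real.exp (-s 2)) 0 0
      0 0 0 0 0 0 0 0 0 0 0 0
      (by funext t; simp [Function.update])
  rw [shearBracket, h1x1, h2x1, h0x1, h2x2, h0x2, h1x2]
  have e0 := Real.exp_ne_zero (s 0)
  have e1 := Real.exp_ne_zero (s 1)
  have e2 := Real.exp_ne_zero (s 2)
  simp only [one_mul, neg_one_mul, zero_mul, mul_zero, zero_add, add_zero, neg_neg,
    sub_eq_add_neg, neg_add, Real.exp_add, Real.exp_neg, Real.exp_zero, mul_one]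
  field_simp
  ring
end

section
/- Let $A$ be a unital associative $\mathbb{C}$-algebra, $q\in\mathbb{C}^\times$ with chosen square root $q^{1/2}$, and let $U,V,W\in A$ be invertible with $UV=q^{-1}VU$, $VW=q^{-1}WV$, $WU=q^{-1}UW$. Let $G_1,G_2$ be central scalars and define $X_1=-q^{1/2}VW-G_2W$, $X_2=-q^{1/2}WU$, $X_3=-q^{1/2}UV-G_1V$, and $G_\infty=q^{1/2}UVW$. Then: (i) $q^{1/2}X_1X_2-q^{-1/2}X_2X_1=0$; (ii) $q^{1/2}X_2X_3-q^{-1/2}X_3X_2=(q^{-1/2}-q^{1/2})(-G_1G_\infty)$; (iii) $q^{1/2}X_3X_1-q^{-1/2}X_1X_3=(q^{-1/2}-q^{1/2})(-G_2G_\infty)$. -/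
theorem stmt_18 {A : Type*} [Ring A] [Algebra ℂ A]
    (q qh : ℂ) (hq : q ≠ 0) (hqh : qh ^ 2 = q)
    (U V W : A) (hU : IsUnit U) (hV : IsUnit V) (hW : IsUnit W)
    (hUV : U * V = q⁻¹ • (V * U))
    (hVW : V * W = q⁻¹ • (W * V))
    (hWU : W * U = q⁻¹ • (U * W))
    (G1 G2 : ℂ)
    (X1 X2 X3 Ginf : A)
    (hX1 : X1 = -(qh • (V * W)) - G2 • W)
    (hX2 : X2 = -(qh • (W * U)))
    (hX3 : X3 = -(qh • (U * V)) - G1 • V)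
    (hGinf : Ginf = qh • (U * V * W)) :
    qh • (X1 * X2) - qh⁻¹ • (X2 * X1) = 0 ∧
    qh • (X2 * X3) - qh⁻¹ • (X3 * X2) = (qh⁻¹ - qh) • (-(G1 • Ginf)) ∧
    qh • (X3 * X1) - qh⁻¹ • (X1 * X3) = (qh⁻¹ - qh) • (-(G2 • Ginf)) := by
  subst hX1 hX2 hX3 hGinf hqh
  have hqh0 : qh ≠ 0 := fun h => hq (by rw [h]; ring)
  have hUW : U * W = (qh ^ 2) • (W * U) := by
    rw [hWU, smul_smul, mul_inv_cancel₀ hq, one_smul]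
  have hWV : W * V = (qh ^ 2) • (V * W) := by
    rw [hVW, smul_smul, mul_inv_cancel₀ hq, one_smul]
  have hUV' : ∀ x : A, U * (V * x) = (qh ^ 2)⁻¹ • (V * (U * x)) := fun x => by
    rw [← mul_assoc, hUV, smul_mul_assoc, mul_assoc]
  have hUW' : ∀ x : A, U * (W * x) = (qh ^ 2) • (W * (U * x)) := fun x => by
    rw [← mul_assoc, hUW, smul_mul_assoc, mul_assoc]
  have hWV' : ∀ x : A, W * (V * x) = (qh ^ 2) • (V * (W * x)) := fun x => by
    rw [← mul_assoc, hWV, smul_mul_assoc, mul_assoc]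
  refine ⟨?_, ?_, ?_⟩ <;>
  · simp only [mul_assoc, sub_mul, mul_sub, neg_mul, mul_neg, smul_mul_assoc,
      mul_smul_comm, smul_smul, smul_sub, smul_neg, smul_add, add_mul, mul_add,
      neg_neg, hUV, hUW, hWV, hUV', hUW', hWV']
    match_scalars <;> field_simp <;> ring
end

section
/- Let $p_1,s_1,s_2,s_3$ be real numbers, and set $G_1=e^{p_1/2}+e^{-p_1/2}$, $G_2=e^{s_1+s_2+s_3}$, $G_3=e^{s_1+s_2+s_3}$, $G_\infty=e^{s_1+s_2+s_3}$. Define $x_1=-e^{s_2+s_3}-G_2e^{s_3}$, $x_2=-e^{s_3+s_1}-G_3e^{s_1}$, $x_3=-e^{s_1+s_2}-e^{-s_1+s_2}-G_1e^{s_2}-G_2e^{-s_1}$. Then $x_1x_2x_3+x_1^2+\omega_1x_1+\omega_2(x_2+x_3)+\omega_4=0$, where $\omega_1=-G_1G_\infty-G_2G_3$, $\omega_2=-G_2G_\infty$ (which equals $-G_3G_\infty$), and $\omega_4=G_\infty^2+G_1G_2G_3G_\infty$. -/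
theorem stmt_19 (p1 s1 s2 s3 G1 G2 G3 Ginf x1 x2 x3 w1 w2 w4 : ℝ)
    (hG1 : G1 = Real.exp (p1/2) + Real.exp (-(p1/2)))
    (hG2 : G2 = Real.exp (s1 + s2 + s3))
    (hG3 : G3 = Real.exp (s1 + s2 + s3))
    (hGinf : Ginf = Real.exp (s1 + s2 + s3))
    (hx1 : x1 = -Real.exp (s2 + s3) - G2 * Real.exp s3)
    (hx2 : x2 = -Real.exp (s3 + s1) - G3 * Real.exp s1)
    (hx3 : x3 = -Real.exp (s1 + s2) - Real.exp (-s1 + s2)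
      - G1 * Real.exp s2 - G2 * Real.exp (-s1))
    (hw1 : w1 = -G1 * Ginf - G2 * G3)
    (hw2 : w2 = -G2 * Ginf)
    (hw4 : w4 = Ginf^2 + G1 * G2 * G3 * Ginf) :
    w2 = -G3 * Ginf ∧
    x1 * x2 * x3 + x1^2 + w1 * x1 + w2 * (x2 + x3) + w4 = 0 := by
  subst hG1 hG2 hG3 hGinf hx1 hx2 hx3 hw1 hw2 hw4
  constructor
  · ring
  · have h1 := Real.exp_ne_zero s1
    have hp := Real.exp_ne_zero (p1/2)
    simp only [Real.exp_add, Real.exp_neg] at *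
    field_simp
    ring
end
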